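/- arXiv:2604.18147 — 6 statements merged into one kernel-verified Lean document; each statement's English description precedes it below -/
import Mathlib

section
/- Let D, E ⊆ [0,∞)^m be finite unions of anchored boxes with D strictly contained in E (D ⊊ E). Then Mag(D) < Mag(E), where Mag(D) = ∑_{S⊆[m]} 2^{-|S|} λ_{|S|}(π_S D). -/
open Set MeasureTheory

/-- Coordinate projection onto the coordinates in `S`. -/
def proj {m : ℕ} (S : Finset (Fin m)) (x : Fin m → ℝ) : S → ℝ := fun i => x i.1

/-- The anchored box `∏ᵢ [0, aᵢ]`. -/
def anchoredBox {m : ℕ} (a : Fin m → ℝ) : Set (Fin m → ℝ) :=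
  Set.pi Set.univ fun i => Set.Icc 0 (a i)

/-- `D` is a finite union of anchored boxes in `[0,∞)^m`. -/
def FiniteUnionOfAnchoredBoxes {m : ℕ} (D : Set (Fin m → ℝ)) : Prop :=
  ∃ F : Finset (Fin m → ℝ), (∀ a ∈ F, ∀ i, 0 ≤ a i) ∧ D = ⋃ a ∈ F, anchoredBox a

/-- The magnitude of a dominated set, via the all-dimensional projection formula. -/
noncomputable def Mag {m : ℕ} (D : Set (Fin m → ℝ)) : ℝ :=
  ∑ S : Finset (Fin m), (2 : ℝ) ^ (-(S.card : ℤ)) * (volume (proj S '' D)).toReal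

theorem continuous_proj {m : ℕ} (S : Finset (Fin m)) : Continuous (proj S) :=
  continuous_pi fun i => continuous_apply i.1

theorem isCompact_anchoredBox {m : ℕ} (a : Fin m → ℝ) : IsCompact (anchoredBox a) :=
  isCompact_univ_pi fun _ => isCompact_Icc

noncomputable def posCoords {m : ℕ} (x : Fin m → ℝ) : Finset (Fin m) :=
  {i | 0 < x i}

namespace FiniteUnionOfAnchoredBoxes

variable {m : ℕ} {D E : Set (Fin m → ℝ)}

theorem isCompact (hD : FiniteUnionOfAnchoredBoxes D) : IsCompact D := by
  obtain ⟨F, -, rfl⟩ := hD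
  exact F.isCompact_biUnion fun a _ => isCompact_anchoredBox a

theorem isClosed_image_proj (hD : FiniteUnionOfAnchoredBoxes D) (S : Finset (Fin m)) :
    IsClosed (proj S '' D) :=
  (hD.isCompact.image (continuous_proj S)).isClosed

theorem volume_image_proj_ne_top (hD : FiniteUnionOfAnchoredBoxes D) (S : Finset (Fin m)) :
    volume (proj S '' D) ≠ ⊤ :=
  (hD.isCompact.image (continuous_proj S)).measure_lt_top.ne

theorem nonneg (hD : FiniteUnionOfAnchoredBoxes D) {y : Fin m → ℝ} (hy : y ∈ D) : 0 ≤ y := by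
  obtain ⟨F, -, rfl⟩ := hD
  simp only [mem_iUnion] at hy
  obtain ⟨a, -, hya⟩ := hy
  exact fun i => (hya i (mem_univ i)).1

theorem mem_of_le (hD : FiniteUnionOfAnchoredBoxes D) {x y : Fin m → ℝ} (hy : y ∈ D)
    (hx : 0 ≤ x) (hxy : x ≤ y) : x ∈ D := by
  obtain ⟨F, -, rfl⟩ := hD
  simp only [mem_iUnion] at hy ⊢
  obtain ⟨a, ha, hya⟩ := hy
  exact ⟨a, ha, fun i _ => ⟨hx i, (hxy i).trans (hya i (mem_univ i)).2⟩⟩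

theorem mem_image_proj_of_le (hD : FiniteUnionOfAnchoredBoxes D) {S : Finset (Fin m)}
    {x : Fin m → ℝ} (hx : x ∈ D) {q : S → ℝ} (hq : 0 ≤ q) (hqx : ∀ i, q i ≤ x i) :
    q ∈ proj S '' D := by
  refine ⟨fun i => if h : i ∈ S then q ⟨i, h⟩ else 0, hD.mem_of_le hx (fun i => ?_) (fun i => ?_),
    funext fun i => by simp [proj, i.2]⟩
  · split_ifs
    exacts [hq _, le_rfl]
  · split_ifs
    exacts [hqx _, hD.nonneg hx i]

/-- If `y ∈ D` agreed with `x` on `posCoords x`, then `x ≤ y` and `x` would lie in `D`. -/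
theorem proj_notMem_image_proj (hD : FiniteUnionOfAnchoredBoxes D) {x : Fin m → ℝ}
    (hx : 0 ≤ x) (hxD : x ∉ D) : proj (posCoords x) x ∉ proj (posCoords x) '' D := by
  rintro ⟨y, hy, hyx⟩
  refine hxD (hD.mem_of_le hy hx fun i => ?_)
  by_cases hi : 0 < x i
  · exact (congrFun hyx ⟨i, by simpa [posCoords] using hi⟩).ge
  · exact (not_lt.1 hi).trans (hD.nonneg hy i)

/-- With `T = posCoords x` and `δ` small, the box `∏_{i ∈ T} [max 0 (xᵢ - δ), xᵢ]` has positive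
volume, lies in the projection of `E` and misses the (closed) projection of `D`. -/
theorem volume_image_proj_lt (hD : FiniteUnionOfAnchoredBoxes D)
    (hE : FiniteUnionOfAnchoredBoxes E) (hDE : D ⊆ E) {x : Fin m → ℝ} (hxE : x ∈ E)
    (hxD : x ∉ D) : volume (proj (posCoords x) '' D) < volume (proj (posCoords x) '' E) := by
  set T := posCoords x
  have hx : 0 ≤ x := hE.nonneg hxE
  obtain ⟨δ, hδ, hball⟩ : ∃ δ > 0, Metric.closedBall (proj T x) δ ⊆ (proj T '' D)ᶜ :=
    Metric.nhds_basis_closedBall.mem_iff.1 <|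
      (hD.isClosed_image_proj T).isOpen_compl.mem_nhds (hD.proj_notMem_image_proj hx hxD)
  set K : Set (T → ℝ) := pi univ fun i => Icc (max 0 (x i - δ)) (x i)
  have hK_ball : K ⊆ Metric.closedBall (proj T x) δ := by
    rw [closedBall_pi _ hδ.le]
    refine pi_mono fun i _ => ?_
    rw [Real.closedBall_eq_Icc]
    exact Icc_subset_Icc (le_max_right _ _) (le_add_of_nonneg_right hδ.le)
  have hK_disj : Disjoint (proj T '' D) K :=
    subset_compl_iff_disjoint_left.1 (hK_ball.trans hball)
  have hK_sub : K ⊆ proj T '' E := fun q hq =>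
    hE.mem_image_proj_of_le hxE (fun i => (le_max_left _ _).trans (hq i trivial).1)
      fun i => (hq i trivial).2
  have hK_vol : volume K ≠ 0 := by
    rw [volume_pi_pi]
    refine Finset.prod_ne_zero_iff.2 fun i _ => ?_
    have hxi : 0 < x i := by simpa [T, posCoords] using i.2
    simpa [Real.volume_Icc] using ⟨hxi, hδ⟩
  calc volume (proj T '' D)
      < volume (proj T '' D) + volume K :=
        ENNReal.lt_add_right (hD.volume_image_proj_ne_top T) hK_vol
    _ = volume (proj T '' D ∪ K) :=
        (measure_union hK_disj (MeasurableSet.univ_pi fun _ => measurableSet_Icc)).symm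
    _ ≤ volume (proj T '' E) := measure_mono (union_subset (image_mono hDE) hK_sub)

end FiniteUnionOfAnchoredBoxes

theorem magnitude_strict_set_monotonicity {m : ℕ} (D E : Set (Fin m → ℝ))
    (hD : FiniteUnionOfAnchoredBoxes D) (hE : FiniteUnionOfAnchoredBoxes E)
    (hDE : D ⊂ E) :
    Mag D < Mag E := by
  obtain ⟨x, hxE, hxD⟩ := exists_of_ssubset hDE
  refine Finset.sum_lt_sum (fun S _ => ?_) ⟨posCoords x, Finset.mem_univ _, ?_⟩
  · gcongr
    exact hE.volume_image_proj_ne_top S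
  · gcongr
    · exact hE.volume_image_proj_ne_top _
    · exact hD.volume_image_proj_lt hE hDE.subset hxE hxD
end

section
/- The function HV(t_1,…,t_μ) = ∑_{i=1}^μ (t_i − t_{i−1})(4 − t_i) (with t_0 = 0) over the region 0 ≤ t_1 ≤ ⋯ ≤ t_μ ≤ 4 is uniquely maximized at the arithmetic progression t_i = 4i/(μ+1), i = 1,…,μ. -/
open Finset

/-- Feasibility: `0 = t 0 ≤ t 1 ≤ ⋯ ≤ t μ ≤ 4`. -/
def Feasible (μ : ℕ) (t : ℕ → ℝ) : Prop :=
  t 0 = 0 ∧ (∀ i < μ, t i ≤ t (i + 1)) ∧ t μ ≤ 4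

/-- The hypervolume of the dominated region on the linear front. -/
def HV (μ : ℕ) (t : ℕ → ℝ) : ℝ :=
  ∑ i ∈ Finset.Icc 1 μ, (t i - t (i - 1)) * (4 - t i)

/-!
Write `d_i = t_{i+1} - t_i` for `i < μ` and `d_μ = 4 - t_μ`; these `μ + 1` gaps sum to `4`.
Since `4 - t_{i+1} = ∑_{j > i} d_j`, the hypervolume is `∑_{i < j} d_i d_j = (16 - ∑ d_i²) / 2`,
so maximizing it means minimizing `∑ d_i²` under `∑ d_i = 4`. Expanding around the mean
`c = 4 / (μ + 1)` gives `∑ d_i² = 16 / (μ + 1) + ∑ (d_i - c)²`, which is minimal exactly when all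
gaps equal `c`, i.e. at the arithmetic progression.
-/

/-- Squared deviation of the `n + 1` gaps of `t 0, …, t n, L` from `L / (n + 1)`, their mean when
`t 0 = 0`. -/
noncomputable def spacingDefect (L : ℝ) (n : ℕ) (t : ℕ → ℝ) : ℝ :=
  ∑ i ∈ range n, (t (i + 1) - t i - L / (n + 1)) ^ 2 + (L - t n - L / (n + 1)) ^ 2

lemma HV_eq_sum_range (μ : ℕ) (t : ℕ → ℝ) :
    HV μ t = ∑ i ∈ range μ, (t (i + 1) - t i) * (4 - t (i + 1)) := by
  induction μ with
  | zero => simp [HV]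
  | succ n ih =>
    rw [HV, sum_Icc_succ_top (by omega), ← HV, ih, sum_range_succ, Nat.add_sub_cancel]

lemma sum_range_gap_mul_eq (L : ℝ) (n : ℕ) (t : ℕ → ℝ) :
    ∑ i ∈ range n, (t (i + 1) - t i) * (L - t (i + 1))
      = ((L - t 0) ^ 2 - ∑ i ∈ range n, (t (i + 1) - t i) ^ 2 - (L - t n) ^ 2) / 2 := by
  induction n with
  | zero => simp
  | succ n ih => rw [sum_range_succ, sum_range_succ, ih]; ring

lemma sum_range_gap_sub_sq (n : ℕ) (t : ℕ → ℝ) (c : ℝ) :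
    ∑ i ∈ range n, (t (i + 1) - t i - c) ^ 2
      = ∑ i ∈ range n, (t (i + 1) - t i) ^ 2 - 2 * c * (t n - t 0) + n * c ^ 2 := by
  induction n with
  | zero => simp
  | succ n ih =>
    rw [sum_range_succ, sum_range_succ, ih]
    push_cast
    ring

lemma HV_eq_sub_spacingDefect (μ : ℕ) {t : ℕ → ℝ} (h0 : t 0 = 0) :
    HV μ t = 8 * μ / (μ + 1) - spacingDefect 4 μ t / 2 := by
  rw [HV_eq_sum_range, sum_range_gap_mul_eq, spacingDefect, sum_range_gap_sub_sq, h0]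
  field_simp
  ring

lemma spacingDefect_nonneg (L : ℝ) (n : ℕ) (t : ℕ → ℝ) : 0 ≤ spacingDefect L n t := by
  unfold spacingDefect
  positivity

lemma spacingDefect_progression (L : ℝ) (n : ℕ) :
    spacingDefect L n (fun i => L * i / (n + 1)) = 0 := by
  have hn : (n : ℝ) + 1 ≠ 0 := by positivity
  have hstep (i : ℕ) : L * ↑(i + 1) / (n + 1) - L * i / (n + 1) - L / (n + 1) = 0 := by
    field_simp
    push_cast
    ring
  have hlast : L - L * n / (n + 1) - L / (n + 1) = 0 := by
    field_simp
    ring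
  simp only [spacingDefect, hstep, hlast]
  simp

lemma eq_progression_of_spacingDefect_eq_zero {L : ℝ} {n : ℕ} {t : ℕ → ℝ} (h0 : t 0 = 0)
    (hD : spacingDefect L n t = 0) (i : ℕ) (hi : i ≤ n) : t i = L * i / (n + 1) := by
  have hsum : ∑ j ∈ range n, (t (j + 1) - t j - L / (n + 1)) ^ 2 = 0 :=
    (add_eq_zero_iff_of_nonneg (sum_nonneg fun _ _ => sq_nonneg _) (sq_nonneg _)).1 hD |>.1
  have hstep (j : ℕ) (hj : j < n) : t (j + 1) = t j + L / (n + 1) := by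
    have := (sum_eq_zero_iff_of_nonneg fun _ _ => sq_nonneg _).1 hsum j (mem_range.2 hj)
    linarith [pow_eq_zero_iff two_ne_zero |>.1 this]
  induction i with
  | zero => simp [h0]
  | succ i ih =>
    rw [hstep i hi, ih (by omega)]
    push_cast
    ring

lemma feasible_progression (μ : ℕ) : Feasible μ (fun i => 4 * i / (μ + 1)) := by
  have hpos : (0 : ℝ) < μ + 1 := by positivity
  refine ⟨by simp, fun i _ => ?_, ?_⟩
  · dsimp only
    gcongr
    linarith
  · rw [div_le_iff₀ hpos]
    linarith

theorem hypervolume_unique_maximizer_general (μ : ℕ) :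
    Feasible μ (fun i => 4 * i / (μ + 1)) ∧
    (∀ t : ℕ → ℝ, Feasible μ t → HV μ t ≤ HV μ (fun i => 4 * i / (μ + 1))) ∧
    (∀ t : ℕ → ℝ, Feasible μ t → HV μ t = HV μ (fun i => 4 * i / (μ + 1)) →
      ∀ i ∈ Finset.Icc 1 μ, t i = 4 * i / (μ + 1)) := by
  have hmax : HV μ (fun i => 4 * i / (μ + 1)) = 8 * μ / (μ + 1) := by
    rw [HV_eq_sub_spacingDefect μ (by simp), spacingDefect_progression]
    ring
  refine ⟨feasible_progression μ, fun t ht => ?_, fun t ht heq i hi => ?_⟩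
  · rw [hmax, HV_eq_sub_spacingDefect μ ht.1]
    linarith [spacingDefect_nonneg 4 μ t]
  · rw [hmax, HV_eq_sub_spacingDefect μ ht.1] at heq
    exact eq_progression_of_spacingDefect_eq_zero ht.1 (by linarith) i (mem_Icc.1 hi).2

theorem hypervolume_unique_maximizer (μ : ℕ) (hμ : 1 ≤ μ) :
    Feasible μ (fun i => 4 * i / (μ + 1)) ∧
    (∀ t : ℕ → ℝ, Feasible μ t → HV μ t ≤ HV μ (fun i => 4 * i / (μ + 1))) ∧
    (∀ t : ℕ → ℝ, Feasible μ t → HV μ t = HV μ (fun i => 4 * i / (μ + 1)) →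
      ∀ i ∈ Finset.Icc 1 μ, t i = 4 * i / (μ + 1)) :=
  hypervolume_unique_maximizer_general μ
end

section
/- For real u ≥ v ≥ w ≥ 0, the three-dimensional Lebesgue measure of the union of the six anchored boxes [0,σ(u)]×[0,σ(v)]×[0,σ(w)] over all permutations σ of the coordinates equals 6uvw − 3uw² − 3v²w + w³. -/
/-!
Slice `D(u,v,w)` by the last coordinate `t`. The section is the planar L-shape
`[0,a]×[0,b] ∪ [0,b]×[0,a]` of area `2ab - b²`, where `(a,b)` is `(u,v)` for `t ≤ w`,
`(u,w)` for `w < t ≤ v` and `(v,w)` for `v < t ≤ u`: a point lies in `D(u,v,w)` iff its largest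
coordinate is at most `u`, its middle one at most `v` and its smallest at most `w`.
Summing over the three slabs gives `w(2uv - v²) + (v - w)(2uw - w²) + (u - v)(2vw - w²)`.
-/

open Set MeasureTheory

def orbitBoxUnion {n : ℕ} (a : Fin n → ℝ) : Set (Fin n → ℝ) :=
  ⋃ σ : Equiv.Perm (Fin n), univ.pi fun i => Icc 0 (a (σ i))

lemma mem_orbitBoxUnion {n : ℕ} {a p : Fin n → ℝ} :
    p ∈ orbitBoxUnion a ↔ ∃ σ : Equiv.Perm (Fin n), ∀ i, 0 ≤ p i ∧ p i ≤ a (σ i) := by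
  simp only [orbitBoxUnion, mem_iUnion, mem_univ_pi, mem_Icc]

def box3 (s t r : Set ℝ) : Set (Fin 3 → ℝ) := univ.pi ![s, t, r]

lemma mem_box3 {s t r : Set ℝ} {p : Fin 3 → ℝ} :
    p ∈ box3 s t r ↔ p 0 ∈ s ∧ p 1 ∈ t ∧ p 2 ∈ r := by
  simp [box3, Fin.forall_fin_succ]

lemma measurableSet_box3 {s t r : Set ℝ} (hs : MeasurableSet s) (ht : MeasurableSet t)
    (hr : MeasurableSet r) : MeasurableSet (box3 s t r) :=
  MeasurableSet.univ_pi fun i => by fin_cases i <;> assumption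

lemma volume_box3 (s t r : Set ℝ) :
    volume (box3 s t r) = volume s * volume t * volume r := by
  simp [box3, volume_pi_pi, Fin.prod_univ_three, mul_assoc]

def lShapeSlab (a b : ℝ) (r : Set ℝ) : Set (Fin 3 → ℝ) :=
  box3 (Icc 0 a) (Icc 0 b) r ∪ box3 (Icc 0 b) (Ioc b a) r

lemma mem_lShapeSlab {a b : ℝ} (hba : b ≤ a) {r : Set ℝ} {p : Fin 3 → ℝ} :
    p ∈ lShapeSlab a b r ↔
      0 ≤ p 0 ∧ 0 ≤ p 1 ∧ (p 0 ≤ a ∧ p 1 ≤ b ∨ p 0 ≤ b ∧ p 1 ≤ a) ∧ p 2 ∈ r := by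
  simp only [lShapeSlab, mem_union, mem_box3, mem_Icc, mem_Ioc]
  grind

lemma measurableSet_lShapeSlab (a b : ℝ) {r : Set ℝ} (hr : MeasurableSet r) :
    MeasurableSet (lShapeSlab a b r) :=
  (measurableSet_box3 measurableSet_Icc measurableSet_Icc hr).union
    (measurableSet_box3 measurableSet_Icc measurableSet_Ioc hr)

lemma volume_lShapeSlab {a b : ℝ} (hb : 0 ≤ b) (hba : b ≤ a) {r : Set ℝ}
    (hr : MeasurableSet r) :
    volume (lShapeSlab a b r) = ENNReal.ofReal (2 * a * b - b ^ 2) * volume r := by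
  have hdisj : Disjoint (box3 (Icc 0 a) (Icc 0 b) r) (box3 (Icc 0 b) (Ioc b a) r) :=
    disjoint_univ_pi.2 ⟨1, (Iic_disjoint_Ioc le_rfl).mono_left Icc_subset_Iic_self⟩
  rw [lShapeSlab,
    measure_union hdisj (measurableSet_box3 measurableSet_Icc measurableSet_Ioc hr),
    volume_box3, volume_box3]
  simp only [Real.volume_Icc, Real.volume_Ioc, sub_zero]
  rw [← ENNReal.ofReal_mul (hb.trans hba), ← ENNReal.ofReal_mul hb, ← add_mul,
    ← ENNReal.ofReal_add (mul_nonneg (hb.trans hba) hb) (mul_nonneg hb (sub_nonneg.2 hba))]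
  ring_nf

lemma disjoint_lShapeSlab {a b a' b' : ℝ} {r r' : Set ℝ} (h : Disjoint r r') :
    Disjoint (lShapeSlab a b r) (lShapeSlab a' b' r') := by
  have key (s t s' t' : Set ℝ) : Disjoint (box3 s t r) (box3 s' t' r') :=
    disjoint_univ_pi.2 ⟨2, h⟩
  exact .union_left (.union_right (key ..) (key ..)) (.union_right (key ..) (key ..))

lemma sorted_bounds_of_le_comp_perm {u v w : ℝ} (huv : v ≤ u) (hvw : w ≤ v) {p : Fin 3 → ℝ}
    {σ : Equiv.Perm (Fin 3)} (hσ : ∀ i, p i ≤ ![u, v, w] (σ i)) :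
    (∀ i, p i ≤ u) ∧ (∀ i j, i ≠ j → p i ≤ v ∨ p j ≤ v) ∧ ∃ i, p i ≤ w := by
  have le_u : ∀ k, ![u, v, w] k ≤ u := by intro k; fin_cases k <;> simp <;> linarith
  have le_v : ∀ k, k ≠ 0 → ![u, v, w] k ≤ v := by intro k hk; fin_cases k <;> simp_all
  refine ⟨fun i => (hσ i).trans (le_u _), fun i j hij => ?_,
    σ.symm 2, by simpa using hσ (σ.symm 2)⟩
  by_cases hi : σ i = 0
  · exact .inr ((hσ j).trans (le_v _ fun hj => hij (σ.injective (hi.trans hj.symm))))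
  · exact .inl ((hσ i).trans (le_v _ hi))

lemma orbitBoxUnion_eq_union_lShapeSlab {u v w : ℝ} (huv : v ≤ u) (hvw : w ≤ v) (hw : 0 ≤ w) :
    orbitBoxUnion ![u, v, w] =
      lShapeSlab u v (Icc 0 w) ∪ lShapeSlab u w (Ioc w v) ∪ lShapeSlab v w (Ioc v u) := by
  ext p
  simp only [mem_union, mem_lShapeSlab huv, mem_lShapeSlab hvw, mem_lShapeSlab (hvw.trans huv),
    mem_Icc, mem_Ioc, mem_orbitBoxUnion]
  constructor
  · rintro ⟨σ, hσ⟩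
    obtain ⟨hu, hv, i, hi⟩ := sorted_bounds_of_le_comp_perm huv hvw fun i => (hσ i).2
    have := hv 0 1 (by decide); have := hv 0 2 (by decide); have := hv 1 2 (by decide)
    fin_cases i <;> simp only [Fin.zero_eta, Fin.mk_one, Fin.reduceFinMk, Fin.isValue] at hi <;>
      grind
  -- each witness sends a coordinate to the index of the bound that it satisfies
  · rintro ((⟨_, _, _ | _, _⟩ | ⟨_, _, _ | _, _⟩) | ⟨_, _, _ | _, _⟩) <;>
        [use 1; use Equiv.swap 0 1; use Equiv.swap 1 2; use Equiv.swap 1 2 * Equiv.swap 0 1;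
          use Equiv.swap 0 1 * Equiv.swap 1 2; use Equiv.swap 0 2] <;>
      simp [Fin.forall_fin_succ, Equiv.swap_apply_of_ne_of_ne] <;> grind

theorem symmetric_orbit_hypervolume (u v w : ℝ)
    (huv : v ≤ u) (hvw : w ≤ v) (hw : 0 ≤ w) :
    (volume (⋃ σ : Equiv.Perm (Fin 3),
        Set.pi Set.univ fun i => Set.Icc (0:ℝ) (![u, v, w] (σ i)))).toReal
      = 6 * u * v * w - 3 * u * w ^ 2 - 3 * v ^ 2 * w + w ^ 3 := by
  have hv : 0 ≤ v := hw.trans hvw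
  have area_nonneg {a b : ℝ} (hb : 0 ≤ b) (hba : b ≤ a) : 0 ≤ 2 * a * b - b ^ 2 := by nlinarith
  have hlow_mid : Disjoint (Icc 0 w) (Ioc w v) :=
    (Iic_disjoint_Ioc le_rfl).mono_left Icc_subset_Iic_self
  have hlow_high : Disjoint (Icc 0 w) (Ioc v u) :=
    (Iic_disjoint_Ioc hvw).mono_left Icc_subset_Iic_self
  have hmid_high : Disjoint (Ioc w v) (Ioc v u) := Ioc_disjoint_Ioc_of_le le_rfl
  change (volume (orbitBoxUnion ![u, v, w])).toReal = _
  rw [orbitBoxUnion_eq_union_lShapeSlab huv hvw hw,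
    measure_union ((disjoint_lShapeSlab hlow_high).union_left (disjoint_lShapeSlab hmid_high))
      (measurableSet_lShapeSlab _ _ measurableSet_Ioc),
    measure_union (disjoint_lShapeSlab hlow_mid) (measurableSet_lShapeSlab _ _ measurableSet_Ioc),
    volume_lShapeSlab hv huv measurableSet_Icc,
    volume_lShapeSlab hw (hvw.trans huv) measurableSet_Ioc,
    volume_lShapeSlab hw hvw measurableSet_Ioc,
    Real.volume_Icc, Real.volume_Ioc, Real.volume_Ioc, sub_zero,
    ENNReal.toReal_add (by finiteness) (by finiteness),
    ENNReal.toReal_add (by finiteness) (by finiteness)]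
  simp only [ENNReal.toReal_mul, ENNReal.toReal_ofReal hw,
    ENNReal.toReal_ofReal (area_nonneg hv huv), ENNReal.toReal_ofReal (area_nonneg hw hvw),
    ENNReal.toReal_ofReal (area_nonneg hw (hvw.trans huv)),
    ENNReal.toReal_ofReal (sub_nonneg.2 hvw), ENNReal.toReal_ofReal (sub_nonneg.2 huv)]
  ring
end

section
/- Maximize f(u,v,w) = 6uvw − 3uw² − 3v²w + w³ subject to u + v + w = 1 and u ≥ v ≥ w ≥ 0. The unique maximizer is u = (62 + 5√13)/153, v = (43 + √13)/153, w = (48 − 6√13)/153. -/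
/-- The hypervolume of the dominated region of the symmetric six-point orbit. -/
def f (u v w : ℝ) : ℝ := 6 * u * v * w - 3 * u * w ^ 2 - 3 * v ^ 2 * w + w ^ 3

/-- Feasibility on the simplex with ordered coordinates. -/
def SimplexFeasible (u v w : ℝ) : Prop := u + v + w = 1 ∧ v ≤ u ∧ w ≤ v ∧ 0 ≤ w

/-!
On the plane `u + v + w = 1` the gap `f u⋆ v⋆ w⋆ - f u v w` is a quadratic in `v` with leading
coefficient `9 w ≥ 0`. Completing the square leaves a cubic in `w` alone, which has a double
root at `w⋆` and whose remaining linear factor is positive for `w ≤ 1/3`. Hence the gap is a sum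
of two nonnegative terms, and it vanishes only when `w = w⋆` and then `v = v⋆`.
-/

open Real

local notation "u⋆" => (62 + 5 * √13) / 153
local notation "v⋆" => (43 + √13) / 153
local notation "w⋆" => (48 - 6 * √13) / 153

lemma three_le_sqrt_thirteen : 3 ≤ √13 := (le_sqrt' (by norm_num)).mpr (by norm_num)

lemma sqrt_thirteen_le_four : √13 ≤ 4 := (sqrt_le_left (by norm_num)).mpr (by norm_num)

lemma simplexFeasible_maximizer : SimplexFeasible u⋆ v⋆ w⋆ := by
  have := three_le_sqrt_thirteen
  have := sqrt_thirteen_le_four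
  exact ⟨by ring, by linarith, by linarith, by linarith⟩

section

variable {u v w : ℝ}

lemma f_maximizer_sub_f (h : u + v + w = 1) :
    f u⋆ v⋆ w⋆ - f u v w =
      9 * w * (v - v⋆ + (w - w⋆) / 6) ^ 2 + (w - w⋆) ^ 2 * (√13 / 2 - 17 * (w - w⋆) / 4) := by
  obtain rfl : u = 1 - v - w := by linarith
  unfold f
  linear_combination
    (16 / 2601 - 2 * √13 / 2601 - w / 51) * sq_sqrt (show (0 : ℝ) ≤ 13 by norm_num)

lemma SimplexFeasible.cubic_factor_pos (hf : SimplexFeasible u v w) :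
    0 < √13 / 2 - 17 * (w - w⋆) / 4 := by
  obtain ⟨hsum, hvu, hwv, -⟩ := hf
  linarith [three_le_sqrt_thirteen]

lemma SimplexFeasible.square_term_nonneg (hf : SimplexFeasible u v w) :
    0 ≤ 9 * w * (v - v⋆ + (w - w⋆) / 6) ^ 2 := by
  have := hf.2.2.2
  positivity

lemma SimplexFeasible.f_le_maximizer (hf : SimplexFeasible u v w) : f u v w ≤ f u⋆ v⋆ w⋆ := by
  have hcub := mul_nonneg (sq_nonneg (w - w⋆)) hf.cubic_factor_pos.le
  linarith [f_maximizer_sub_f hf.1, hf.square_term_nonneg]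

lemma SimplexFeasible.eq_maximizer_of_f_eq (hf : SimplexFeasible u v w)
    (heq : f u v w = f u⋆ v⋆ w⋆) : u = u⋆ ∧ v = v⋆ ∧ w = w⋆ := by
  have hgap := f_maximizer_sub_f hf.1
  rw [heq, sub_self] at hgap
  have hsq := hf.square_term_nonneg
  have hpos := hf.cubic_factor_pos
  have hcub := mul_nonneg (sq_nonneg (w - w⋆)) hpos.le
  have hw : w = w⋆ := by
    have hcub_zero : (w - w⋆) ^ 2 * (√13 / 2 - 17 * (w - w⋆) / 4) = 0 := by linarith
    simpa [hpos.ne', sub_eq_zero] using hcub_zero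
  have hw_pos : 0 < w := by rw [hw]; linarith [sqrt_thirteen_le_four]
  have hv : v - v⋆ + (w - w⋆) / 6 = 0 := by
    have hsq_zero : 9 * w * (v - v⋆ + (w - w⋆) / 6) ^ 2 = 0 := by linarith
    simpa [hw_pos.ne'] using hsq_zero
  refine ⟨?_, ?_, hw⟩ <;> linarith [hf.1]

end

theorem hypervolume_simplex_unique_maximizer :
    SimplexFeasible ((62 + 5 * Real.sqrt 13) / 153) ((43 + Real.sqrt 13) / 153)
      ((48 - 6 * Real.sqrt 13) / 153) ∧
    (∀ u v w : ℝ, SimplexFeasible u v w →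
      f u v w ≤ f ((62 + 5 * Real.sqrt 13) / 153) ((43 + Real.sqrt 13) / 153)
        ((48 - 6 * Real.sqrt 13) / 153)) ∧
    (∀ u v w : ℝ, SimplexFeasible u v w →
      f u v w = f ((62 + 5 * Real.sqrt 13) / 153) ((43 + Real.sqrt 13) / 153)
        ((48 - 6 * Real.sqrt 13) / 153) →
      u = (62 + 5 * Real.sqrt 13) / 153 ∧ v = (43 + Real.sqrt 13) / 153 ∧
        w = (48 - 6 * Real.sqrt 13) / 153) :=
  ⟨simplexFeasible_maximizer, fun _ _ _ hf => hf.f_le_maximizer,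
    fun _ _ _ hf heq => hf.eq_maximizer_of_f_eq heq⟩
end

section
/- For H ≥ 1 and integers 1 ≤ a, b, c ≤ H, the grid cell C_{abc} = [(a−1)/H, a/H] × [(b−1)/H, b/H] × [(c−1)/H, c/H] is contained in U_H = ⋃_{p ∈ G_H} [0,p] if and only if a + b + c ≤ H, where G_H = {(i/H, j/H, k/H) : i,j,k ∈ ℕ₀, i+j+k = H}. -/
open Set

/-- The complete Das–Dennis grid of level `H` on the unit simplex in `ℝ³`. -/
def dasDennisGrid (H : ℕ) : Set (ℝ × ℝ × ℝ) :=
  {p | ∃ i j k : ℕ, i + j + k = H ∧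
    p = ((i : ℝ) / H, (j : ℝ) / H, (k : ℝ) / H)}

/-- The dominated region generated by the level-`H` Das–Dennis grid. -/
def U (H : ℕ) : Set (ℝ × ℝ × ℝ) :=
  ⋃ p ∈ dasDennisGrid H, Set.Icc (0:ℝ) p.1 ×ˢ (Set.Icc (0:ℝ) p.2.1 ×ˢ Set.Icc (0:ℝ) p.2.2)

/-! `U H` is the union of the order intervals `Icc 0 p` over grid points `p`, and the cell is the
order interval between its corners, which lie above `0`. So the cell lies in `U H` iff its top corner
`(a/H, b/H, c/H)` is dominated by some grid point `(i/H, j/H, k/H)`, i.e. `a ≤ i`, `b ≤ j`, `c ≤ k`;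
naturals with `i + j + k = H` dominating `(a, b, c)` exist iff `a + b + c ≤ H`. -/

theorem Icc_subset_biUnion_Icc_iff {α : Type*} [Preorder α] {s : Set α} {z l h : α}
    (hzl : z ≤ l) (hlh : l ≤ h) :
    Icc l h ⊆ ⋃ p ∈ s, Icc z p ↔ ∃ p ∈ s, h ≤ p := by
  constructor
  · intro hsub
    obtain ⟨p, hp, -, hhp⟩ := mem_iUnion₂.mp (hsub (right_mem_Icc.mpr hlh))
    exact ⟨p, hp, hhp⟩
  · rintro ⟨p, hp, hhp⟩ x ⟨hlx, hxh⟩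
    exact mem_iUnion₂.mpr ⟨p, hp, hzl.trans hlx, hxh.trans hhp⟩

theorem U_eq_biUnion_Icc (H : ℕ) : U H = ⋃ p ∈ dasDennisGrid H, Icc 0 p := by
  simp only [U, Icc_prod_Icc]
  rfl

theorem exists_add_add_eq_and_le_iff (a b c H : ℕ) :
    (∃ i j k : ℕ, i + j + k = H ∧ a ≤ i ∧ b ≤ j ∧ c ≤ k) ↔ a + b + c ≤ H := by
  constructor
  · rintro ⟨i, j, k, rfl, hai, hbj, hck⟩
    omega
  · intro h
    exact ⟨a, b, H - a - b, by omega, le_rfl, le_rfl, by omega⟩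

theorem div_triple_le_div_triple_iff {H : ℕ} (hH : 0 < H) (a b c i j k : ℕ) :
    ((a : ℝ) / H, (b : ℝ) / H, (c : ℝ) / H) ≤ ((i : ℝ) / H, (j : ℝ) / H, (k : ℝ) / H) ↔
      a ≤ i ∧ b ≤ j ∧ c ≤ k := by
  have hH' : (0 : ℝ) < H := by exact_mod_cast hH
  simp only [Prod.mk_le_mk, div_le_div_iff_of_pos_right hH', Nat.cast_le]

theorem exists_dasDennisGrid_ge_iff {H : ℕ} (hH : 0 < H) (a b c : ℕ) :
    (∃ p ∈ dasDennisGrid H, ((a : ℝ) / H, (b : ℝ) / H, (c : ℝ) / H) ≤ p) ↔ a + b + c ≤ H := by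
  rw [← exists_add_add_eq_and_le_iff]
  constructor
  · rintro ⟨_, ⟨i, j, k, hijk, rfl⟩, hle⟩
    exact ⟨i, j, k, hijk, (div_triple_le_div_triple_iff hH a b c i j k).mp hle⟩
  · rintro ⟨i, j, k, hijk, hle⟩
    exact ⟨_, ⟨i, j, k, hijk, rfl⟩, (div_triple_le_div_triple_iff hH a b c i j k).mpr hle⟩

theorem staircase_cell_criterion_general (H : ℕ) (hH : 1 ≤ H) (a b c : ℕ)
    (ha : 1 ≤ a) (hb : 1 ≤ b) (hc : 1 ≤ c) :
    (Set.Icc (((a : ℝ) - 1) / H) ((a : ℝ) / H) ×ˢ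
      (Set.Icc (((b : ℝ) - 1) / H) ((b : ℝ) / H) ×ˢ
        Set.Icc (((c : ℝ) - 1) / H) ((c : ℝ) / H)) ⊆ U H) ↔ a + b + c ≤ H := by
  have hH' : (0 : ℝ) < H := by exact_mod_cast hH
  have lower_nonneg : ∀ n : ℕ, 1 ≤ n → (0 : ℝ) ≤ ((n : ℝ) - 1) / H := fun n hn =>
    div_nonneg (sub_nonneg.mpr (by exact_mod_cast hn)) hH'.le
  have lower_le_upper : ∀ n : ℕ, ((n : ℝ) - 1) / H ≤ (n : ℝ) / H := fun n =>
    div_le_div_of_nonneg_right (by linarith) hH'.le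
  have zero_le_lower_corner :
      (0 : ℝ × ℝ × ℝ) ≤ (((a : ℝ) - 1) / H, ((b : ℝ) - 1) / H, ((c : ℝ) - 1) / H) :=
    ⟨lower_nonneg a ha, lower_nonneg b hb, lower_nonneg c hc⟩
  have lower_corner_le_upper_corner : (((a : ℝ) - 1) / H, ((b : ℝ) - 1) / H, ((c : ℝ) - 1) / H) ≤
      ((a : ℝ) / H, (b : ℝ) / H, (c : ℝ) / H) :=
    ⟨lower_le_upper a, lower_le_upper b, lower_le_upper c⟩
  rw [Icc_prod_Icc, Icc_prod_Icc, U_eq_biUnion_Icc,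
    Icc_subset_biUnion_Icc_iff zero_le_lower_corner lower_corner_le_upper_corner]
  exact exists_dasDennisGrid_ge_iff hH a b c

theorem staircase_cell_criterion (H : ℕ) (hH : 1 ≤ H) (a b c : ℕ)
    (ha : 1 ≤ a) (ha' : a ≤ H) (hb : 1 ≤ b) (hb' : b ≤ H) (hc : 1 ≤ c) (hc' : c ≤ H) :
    (Set.Icc (((a : ℝ) - 1) / H) ((a : ℝ) / H) ×ˢ
      (Set.Icc (((b : ℝ) - 1) / H) ((b : ℝ) / H) ×ˢ
        Set.Icc (((c : ℝ) - 1) / H) ((c : ℝ) / H)) ⊆ U H) ↔ a + b + c ≤ H :=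
  staircase_cell_criterion_general H hH a b c ha hb hc
end

section
/- For every integer H ≥ 1, the three-dimensional Lebesgue measure of U_H = ⋃_{p ∈ G_H} [0,p] equals (H−1)(H−2)/(6H²), and the area of each two-dimensional coordinate projection of U_H equals (H−1)/(2H). -/
/-! Cut space into the half-open cubes `∏ (aᵢ / H, (aᵢ + 1) / H]`. Away from the coordinate
planes, a null set, `U H` is the disjoint union of the cubes with `a + b + c + 3 ≤ H`, and each
coordinate projection of `U H` is the staircase `⋃_{i + j ≤ H} [0, i/H] × [0, j/H]`, which is in
the same way the union of the squares with `a + b + 2 ≤ H`. Splitting off the cells with `a = 0`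
shows that these counts obey Pascal's rule, so they are `C(H, 3)` and `C(H, 2)`. -/

open Set MeasureTheory

open Function

theorem pairwise_disjoint_prod {ι κ α β : Type*} {f : ι → Set α} {g : κ → Set β}
    (hf : Pairwise (Disjoint on f)) (hg : Pairwise (Disjoint on g)) :
    Pairwise (Disjoint on fun t : ι × κ => f t.1 ×ˢ g t.2) := by
  simpa only [univ_prod_univ, PairwiseDisjoint, pairwise_univ] using
    PairwiseDisjoint.prod (hf.set_pairwise univ) (hg.set_pairwise univ)

theorem Nat.cast_choose_three {K : Type*} [Field K] [CharZero K] (n : ℕ) :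
    (n.choose 3 : K) = n * (n - 1) * (n - 2) / 6 := by
  induction n with
  | zero => simp
  | succ n ih =>
    rw [Nat.choose_succ_succ', Nat.cast_add, ih, Nat.cast_choose_two]
    push_cast
    ring

namespace DasDennis

def cell (H a : ℕ) : Set ℝ := Ioc ((a : ℝ) / H) ((a + 1) / H)

theorem volume_cell (H a : ℕ) : volume (cell H a) = ENNReal.ofReal (1 / H) := by
  rw [cell, Real.volume_Ioc]; congr 1; ring

theorem pairwise_disjoint_cell (H : ℕ) : Pairwise (Disjoint on cell H) :=
  (pairwise_disjoint_on _).2 fun a b hab => Ioc_disjoint_Ioc_of_le <| by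
    gcongr; exact_mod_cast hab

theorem mem_Ioc_zero_div_iff_exists_cell {H i : ℕ} {x : ℝ} :
    x ∈ Ioc 0 ((i : ℝ) / H) ↔ ∃ a < i, x ∈ cell H a := by
  constructor
  · rintro ⟨hx, hxi⟩
    have hH : (0 : ℝ) < H := by
      rcases (H.cast_nonneg (α := ℝ)).eq_or_lt with h | h
      · rw [← h, div_zero] at hxi; linarith
      · exact h
    obtain ⟨a, ha⟩ : ∃ a, ⌈x * H⌉₊ = a + 1 :=
      Nat.exists_eq_add_one.2 (Nat.ceil_pos.2 (by positivity))
    have ⟨hlo, hhi⟩ := (Nat.ceil_eq_iff a.succ_ne_zero).1 ha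
    refine ⟨a, ?_, ?_, ?_⟩
    · have : ⌈x * H⌉₊ ≤ i := Nat.ceil_le.2 ((le_div_iff₀ hH).1 hxi)
      omega
    · rw [div_lt_iff₀ hH]; simpa using hlo
    · rw [le_div_iff₀ hH]; exact_mod_cast hhi
  · rintro ⟨a, hai, hlo, hhi⟩
    refine ⟨lt_of_le_of_lt (by positivity) hlo, hhi.trans ?_⟩
    gcongr; exact_mod_cast hai

def cellBox2 (H : ℕ) (t : ℕ × ℕ) : Set (ℝ × ℝ) := cell H t.1 ×ˢ cell H t.2

def cellBox3 (H : ℕ) (t : ℕ × ℕ × ℕ) : Set (ℝ × ℝ × ℝ) := cell H t.1 ×ˢ cellBox2 H t.2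

theorem volume_cellBox2 (H : ℕ) (t : ℕ × ℕ) :
    volume (cellBox2 H t) = ENNReal.ofReal (1 / H) ^ 2 := by
  rw [cellBox2, Measure.volume_eq_prod, Measure.prod_prod, volume_cell, volume_cell, sq]

theorem volume_cellBox3 (H : ℕ) (t : ℕ × ℕ × ℕ) :
    volume (cellBox3 H t) = ENNReal.ofReal (1 / H) ^ 3 := by
  rw [cellBox3, Measure.volume_eq_prod, Measure.prod_prod, volume_cell, volume_cellBox2]
  ring

theorem measurableSet_cellBox2 (H : ℕ) (t : ℕ × ℕ) : MeasurableSet (cellBox2 H t) :=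
  measurableSet_Ioc.prod measurableSet_Ioc

theorem measurableSet_cellBox3 (H : ℕ) (t : ℕ × ℕ × ℕ) : MeasurableSet (cellBox3 H t) :=
  measurableSet_Ioc.prod (measurableSet_cellBox2 H t.2)

theorem pairwise_disjoint_cellBox2 (H : ℕ) : Pairwise (Disjoint on cellBox2 H) :=
  pairwise_disjoint_prod (pairwise_disjoint_cell H) (pairwise_disjoint_cell H)

theorem pairwise_disjoint_cellBox3 (H : ℕ) : Pairwise (Disjoint on cellBox3 H) :=
  pairwise_disjoint_prod (pairwise_disjoint_cell H) (pairwise_disjoint_cellBox2 H)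

open Finset in
theorem volume_biUnion_cellBox2 (H : ℕ) (s : Finset (ℕ × ℕ)) :
    volume (⋃ t ∈ s, cellBox2 H t) = #s * ENNReal.ofReal (1 / H) ^ 2 := by
  rw [measure_biUnion_finset ((pairwise_disjoint_cellBox2 H).set_pairwise _)
    fun t _ => measurableSet_cellBox2 H t]
  simp [volume_cellBox2]

open Finset in
theorem volume_biUnion_cellBox3 (H : ℕ) (s : Finset (ℕ × ℕ × ℕ)) :
    volume (⋃ t ∈ s, cellBox3 H t) = #s * ENNReal.ofReal (1 / H) ^ 3 := by
  rw [measure_biUnion_finset ((pairwise_disjoint_cellBox3 H).set_pairwise _)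
    fun t _ => measurableSet_cellBox3 H t]
  simp [volume_cellBox3]

def cellIndices2 (H : ℕ) : Finset (ℕ × ℕ) :=
  (Finset.range H ×ˢ Finset.range H).filter fun t => t.1 + t.2 + 2 ≤ H

def cellIndices3 (H : ℕ) : Finset (ℕ × ℕ × ℕ) :=
  (Finset.range H ×ˢ Finset.range H ×ˢ Finset.range H).filter
    fun t => t.1 + t.2.1 + t.2.2 + 3 ≤ H

@[simp] theorem mem_cellIndices2 {H : ℕ} {t : ℕ × ℕ} :
    t ∈ cellIndices2 H ↔ t.1 + t.2 + 2 ≤ H := by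
  simp only [cellIndices2, Finset.mem_filter, Finset.mem_product, Finset.mem_range]
  omega

@[simp] theorem mem_cellIndices3 {H : ℕ} {t : ℕ × ℕ × ℕ} :
    t ∈ cellIndices3 H ↔ t.1 + t.2.1 + t.2.2 + 3 ≤ H := by
  simp only [cellIndices3, Finset.mem_filter, Finset.mem_product, Finset.mem_range]
  omega

open Finset in
theorem card_cellIndices2 (H : ℕ) : #(cellIndices2 H) = H.choose 2 := by
  induction H with
  | zero => rfl
  | succ n ih =>
    rw [← card_filter_add_card_filter_not (fun t : ℕ × ℕ => t.1 = 0), Nat.choose_succ_succ',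
      Nat.choose_one_right, ← ih, ← card_range n]
    congr 1
    · refine card_nbij' Prod.snd (fun b => (0, b)) ?_ ?_ ?_ ?_ <;>
        intro t <;> simp [Prod.ext_iff] <;> omega
    · refine card_nbij' (fun t => (t.1 - 1, t.2)) (fun t => (t.1 + 1, t.2)) ?_ ?_ ?_ ?_ <;>
        intro t <;> simp [Prod.ext_iff] <;> omega

open Finset in
theorem card_cellIndices3 (H : ℕ) : #(cellIndices3 H) = H.choose 3 := by
  induction H with
  | zero => rfl
  | succ n ih =>
    rw [← card_filter_add_card_filter_not (fun t : ℕ × ℕ × ℕ => t.1 = 0), Nat.choose_succ_succ',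
      ← ih, ← card_cellIndices2 n]
    congr 1
    · refine card_nbij' Prod.snd (fun b => (0, b)) ?_ ?_ ?_ ?_ <;>
        intro t <;> simp [Prod.ext_iff] <;> omega
    · refine card_nbij' (fun t => (t.1 - 1, t.2)) (fun t => (t.1 + 1, t.2)) ?_ ?_ ?_ ?_ <;>
        intro t <;> simp [Prod.ext_iff] <;> omega

theorem countable_dasDennisGrid (H : ℕ) : (dasDennisGrid H).Countable :=
  (countable_range fun t : ℕ × ℕ × ℕ => ((t.1 : ℝ) / H, (t.2.1 : ℝ) / H, (t.2.2 : ℝ) / H)).mono <|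
    by rintro _ ⟨i, j, k, -, rfl⟩; exact ⟨(i, j, k), rfl⟩

theorem biUnion_dasDennisGrid_Ioc (H : ℕ) :
    ⋃ p ∈ dasDennisGrid H, Ioc 0 p.1 ×ˢ Ioc 0 p.2.1 ×ˢ Ioc 0 p.2.2 =
      ⋃ t ∈ cellIndices3 H, cellBox3 H t := by
  ext x
  simp only [mem_iUnion, dasDennisGrid, mem_ofPred_eq, exists_prop, mem_prod, cellBox3, cellBox2]
  constructor
  · rintro ⟨_, ⟨i, j, k, hs, rfl⟩, hx₁, hx₂, hx₃⟩
    obtain ⟨a, ha, hxa⟩ := mem_Ioc_zero_div_iff_exists_cell.1 hx₁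
    obtain ⟨b, hb, hxb⟩ := mem_Ioc_zero_div_iff_exists_cell.1 hx₂
    obtain ⟨c, hc, hxc⟩ := mem_Ioc_zero_div_iff_exists_cell.1 hx₃
    exact ⟨(a, b, c), mem_cellIndices3.2 (by dsimp; omega), hxa, hxb, hxc⟩
  · rintro ⟨⟨a, b, c⟩, habc, hxa, hxb, hxc⟩
    simp only [mem_cellIndices3] at habc
    exact ⟨_, ⟨a + 1, b + 1, H - a - b - 2, by omega, rfl⟩,
      mem_Ioc_zero_div_iff_exists_cell.2 ⟨a, by omega, hxa⟩,
      mem_Ioc_zero_div_iff_exists_cell.2 ⟨b, by omega, hxb⟩,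
      mem_Ioc_zero_div_iff_exists_cell.2 ⟨c, by omega, hxc⟩⟩

theorem U_ae_eq_biUnion_cellBox3 (H : ℕ) :
    U H =ᵐ[volume] ⋃ t ∈ cellIndices3 H, cellBox3 H t := by
  rw [← biUnion_dasDennisGrid_Ioc]
  exact ae_eq_set_biUnion (countable_dasDennisGrid H) fun p _ =>
    (Measure.set_prod_ae_eq Ioc_ae_eq_Icc
      (Measure.set_prod_ae_eq Ioc_ae_eq_Icc Ioc_ae_eq_Icc)).symm

theorem mem_U {H : ℕ} {p : ℝ × ℝ × ℝ} : p ∈ U H ↔ ∃ i j k : ℕ, i + j + k = H ∧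
    p.1 ∈ Icc 0 ((i : ℝ) / H) ∧ p.2.1 ∈ Icc 0 ((j : ℝ) / H) ∧ p.2.2 ∈ Icc 0 ((k : ℝ) / H) := by
  simp only [U, dasDennisGrid, mem_iUnion, mem_ofPred_eq, exists_prop, mem_prod]
  constructor
  · rintro ⟨_, ⟨i, j, k, hs, rfl⟩, hp⟩
    exact ⟨i, j, k, hs, hp⟩
  · rintro ⟨i, j, k, hs, hp⟩
    exact ⟨_, ⟨i, j, k, hs, rfl⟩, hp⟩

def staircase (H : ℕ) : Set (ℝ × ℝ) :=
  ⋃ t ∈ {t : ℕ × ℕ | t.1 + t.2 ≤ H}, Icc 0 ((t.1 : ℝ) / H) ×ˢ Icc 0 ((t.2 : ℝ) / H)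

theorem biUnion_staircase_Ioc (H : ℕ) :
    ⋃ t ∈ {t : ℕ × ℕ | t.1 + t.2 ≤ H}, Ioc 0 ((t.1 : ℝ) / H) ×ˢ Ioc 0 ((t.2 : ℝ) / H) =
      ⋃ t ∈ cellIndices2 H, cellBox2 H t := by
  ext x
  simp only [mem_iUnion, mem_ofPred_eq, exists_prop, mem_prod, cellBox2, Prod.exists]
  constructor
  · rintro ⟨i, j, hs, hx₁, hx₂⟩
    obtain ⟨a, ha, hxa⟩ := mem_Ioc_zero_div_iff_exists_cell.1 hx₁
    obtain ⟨b, hb, hxb⟩ := mem_Ioc_zero_div_iff_exists_cell.1 hx₂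
    exact ⟨a, b, mem_cellIndices2.2 (by dsimp; omega), hxa, hxb⟩
  · rintro ⟨a, b, hab, hxa, hxb⟩
    simp only [mem_cellIndices2] at hab
    exact ⟨a + 1, b + 1, by omega, mem_Ioc_zero_div_iff_exists_cell.2 ⟨a, by omega, hxa⟩,
      mem_Ioc_zero_div_iff_exists_cell.2 ⟨b, by omega, hxb⟩⟩

theorem staircase_ae_eq_biUnion_cellBox2 (H : ℕ) :
    staircase H =ᵐ[volume] ⋃ t ∈ cellIndices2 H, cellBox2 H t := by
  rw [← biUnion_staircase_Ioc]
  exact ae_eq_set_biUnion (to_countable _) fun p _ =>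
    (Measure.set_prod_ae_eq Ioc_ae_eq_Icc Ioc_ae_eq_Icc).symm

theorem mem_staircase {H : ℕ} {q : ℝ × ℝ} : q ∈ staircase H ↔ ∃ i j : ℕ, i + j ≤ H ∧
    q.1 ∈ Icc 0 ((i : ℝ) / H) ∧ q.2 ∈ Icc 0 ((j : ℝ) / H) := by
  simp only [staircase, mem_iUnion, mem_ofPred_eq, exists_prop, mem_prod, Prod.exists]

theorem zero_mem_Icc_div (H k : ℕ) : (0 : ℝ) ∈ Icc 0 ((k : ℝ) / H) :=
  left_mem_Icc.2 (by positivity)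

theorem image_U_xy (H : ℕ) : (fun p : ℝ × ℝ × ℝ => (p.1, p.2.1)) '' U H = staircase H := by
  ext ⟨x, y⟩
  simp only [mem_image, mem_staircase, Prod.exists, Prod.mk.injEq, mem_U]
  constructor
  · rintro ⟨x, y, z, ⟨i, j, k, hs, hx, hy, -⟩, rfl, rfl⟩
    exact ⟨i, j, by omega, hx, hy⟩
  · rintro ⟨i, j, hs, hx, hy⟩
    exact ⟨x, y, 0, ⟨i, j, H - i - j, by omega, hx, hy, zero_mem_Icc_div H _⟩, rfl, rfl⟩

theorem image_U_xz (H : ℕ) : (fun p : ℝ × ℝ × ℝ => (p.1, p.2.2)) '' U H = staircase H := by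
  ext ⟨x, z⟩
  simp only [mem_image, mem_staircase, Prod.exists, Prod.mk.injEq, mem_U]
  constructor
  · rintro ⟨x, y, z, ⟨i, j, k, hs, hx, -, hz⟩, rfl, rfl⟩
    exact ⟨i, k, by omega, hx, hz⟩
  · rintro ⟨i, k, hs, hx, hz⟩
    exact ⟨x, 0, z, ⟨i, H - i - k, k, by omega, hx, zero_mem_Icc_div H _, hz⟩, rfl, rfl⟩

theorem image_U_yz (H : ℕ) : (fun p : ℝ × ℝ × ℝ => (p.2.1, p.2.2)) '' U H = staircase H := by
  ext ⟨y, z⟩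
  simp only [mem_image, mem_staircase, Prod.exists, Prod.mk.injEq, mem_U]
  constructor
  · rintro ⟨x, y, z, ⟨i, j, k, hs, -, hy, hz⟩, rfl, rfl⟩
    exact ⟨j, k, by omega, hy, hz⟩
  · rintro ⟨j, k, hs, hy, hz⟩
    exact ⟨0, y, z, ⟨H - j - k, j, k, by omega, zero_mem_Icc_div H _, hy, hz⟩, rfl, rfl⟩

theorem toReal_volume_U {H : ℕ} (hH : H ≠ 0) :
    (volume (U H)).toReal = ((H : ℝ) - 1) * ((H : ℝ) - 2) / (6 * (H : ℝ) ^ 2) := by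
  rw [measure_congr (U_ae_eq_biUnion_cellBox3 H), volume_biUnion_cellBox3, card_cellIndices3,
    ENNReal.toReal_mul, ENNReal.toReal_pow, ENNReal.toReal_natCast,
    ENNReal.toReal_ofReal (by positivity), Nat.cast_choose_three]
  field_simp

theorem toReal_volume_staircase {H : ℕ} (hH : H ≠ 0) :
    (volume (staircase H)).toReal = ((H : ℝ) - 1) / (2 * (H : ℝ)) := by
  rw [measure_congr (staircase_ae_eq_biUnion_cellBox2 H), volume_biUnion_cellBox2,
    card_cellIndices2, ENNReal.toReal_mul, ENNReal.toReal_pow, ENNReal.toReal_natCast,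
    ENNReal.toReal_ofReal (by positivity), Nat.cast_choose_two]
  field_simp

end DasDennis

theorem dasDennis_volume_and_projections (H : ℕ) (hH : 1 ≤ H) :
    (volume (U H)).toReal = ((H : ℝ) - 1) * ((H : ℝ) - 2) / (6 * (H : ℝ) ^ 2) ∧
    (volume ((fun p : ℝ × ℝ × ℝ => (p.1, p.2.1)) '' U H)).toReal
      = ((H : ℝ) - 1) / (2 * (H : ℝ)) ∧
    (volume ((fun p : ℝ × ℝ × ℝ => (p.1, p.2.2)) '' U H)).toReal
      = ((H : ℝ) - 1) / (2 * (H : ℝ)) ∧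
    (volume ((fun p : ℝ × ℝ × ℝ => (p.2.1, p.2.2)) '' U H)).toReal
      = ((H : ℝ) - 1) / (2 * (H : ℝ)) := by
  have hH₀ : H ≠ 0 := by omega
  rw [DasDennis.image_U_xy, DasDennis.image_U_xz, DasDennis.image_U_yz]
  exact ⟨DasDennis.toReal_volume_U hH₀, DasDennis.toReal_volume_staircase hH₀,
    DasDennis.toReal_volume_staircase hH₀, DasDennis.toReal_volume_staircase hH₀⟩
end
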